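/- arXiv:1706.05552 — 2 statements merged into one kernel-verified Lean document; each statement's English description precedes it below -/
import Mathlib

section
/- Let $y_1, y_2, \ldots$ be i.i.d. real random variables and for $n \geq m$ define the moving sum $S_n = \sum_{i=n-m+1}^n y_i$. Then for any integers $k \geq m$, $N \geq 1$, and any threshold $h$, the probability that all of $S_k, S_{k+1}, \ldots, S_{k+N-1}$ are less than $h$ is at least $[\mathbb{P}(S_m < h)]^N$. -/
/-!
For `i ≥ m` the window sum `S_i` is a sum of `m` i.i.d. variables, so `P(S_i < h) = P(S_m < h)`.
The sums `S_k, …, S_{k+N-1}` are nondecreasing functions of the independent vector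
`(y_0, …, y_{k+N-1})`, so the events `{S_i < h}` are lower sets in its coordinates. Harris'
inequality says that such events are positively correlated under a product measure on `ℝⁿ`; it
follows by induction on `n` from Chebyshev's inequality for one totally ordered coordinate,
applied to the functions averaged over the remaining coordinates.
-/

open MeasureTheory ProbabilityTheory Finset

/-- Moving sum `S n = ∑_{i=n-m+1}^n y i`. -/
noncomputable def movSum {Ω : Type*} (m : ℕ) (y : ℕ → Ω → ℝ) (n : ℕ) (ω : Ω) : ℝ :=
  ∑ i ∈ Finset.Icc (n + 1 - m) n, y i ω

lemma norm_mul_le_one {α : Type*} {f g : α → ℝ} (hf : ∀ x, ‖f x‖ ≤ 1) (hg : ∀ x, ‖g x‖ ≤ 1)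
    (x : α) : ‖f x * g x‖ ≤ 1 := by
  rw [norm_mul]
  exact mul_le_one₀ (hf x) (norm_nonneg _) (hg x)

section PositiveCorrelations

variable {α β : Type*} [MeasurableSpace α] [MeasurableSpace β]

/-- The Harris–FKG property; the bound `‖f‖ ≤ 1` is a normalisation that makes all functions,
their sections and their products integrable. -/
def HasPositiveCorrelations [Preorder α] (μ : Measure α) : Prop :=
  ∀ f g : α → ℝ, Monotone f → Monotone g → Measurable f → Measurable g →
    (∀ x, ‖f x‖ ≤ 1) → (∀ x, ‖g x‖ ≤ 1) → (∫ x, f x ∂μ) * ∫ x, g x ∂μ ≤ ∫ x, f x * g x ∂μ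

lemma integrable_of_norm_le_one {μ : Measure α} [IsFiniteMeasure μ] {f : α → ℝ}
    (hf : Measurable f) (hb : ∀ x, ‖f x‖ ≤ 1) : Integrable f μ :=
  .of_bound hf.aestronglyMeasurable 1 (ae_of_all _ hb)

lemma integral_integral_sub_mul_sub {μ : Measure α} [IsProbabilityMeasure μ] {f g : α → ℝ}
    (hf : Integrable f μ) (hg : Integrable g μ) (hfg : Integrable (fun x => f x * g x) μ) :
    ∫ x, ∫ y, (f x - f y) * (g x - g y) ∂μ ∂μ
      = 2 * (∫ x, f x * g x ∂μ - (∫ x, f x ∂μ) * ∫ x, g x ∂μ) := by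
  have hinner : ∀ x, ∫ y, (f x - f y) * (g x - g y) ∂μ = f x * g x - f x * ∫ y, g y ∂μ
      - g x * ∫ y, f y ∂μ + ∫ y, f y * g y ∂μ := by
    intro x
    have hexp : (fun y => (f x - f y) * (g x - g y))
        = fun y => f x * g x - f x * g y - g x * f y + f y * g y := by
      funext y; ring
    rw [hexp, integral_add, integral_sub, integral_sub, integral_const, integral_const_mul,
      integral_const_mul]
    · simp
    all_goals fun_prop
  simp_rw [hinner]
  rw [integral_add, integral_sub, integral_sub, integral_const, integral_mul_const,
    integral_mul_const]
  · simp only [probReal_univ, smul_eq_mul, one_mul]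
    ring
  all_goals fun_prop

/-- Chebyshev's inequality: `(f x - f y) * (g x - g y) ≥ 0` since `x` and `y` are comparable. -/
theorem hasPositiveCorrelations_of_linearOrder [LinearOrder α] (μ : Measure α)
    [IsProbabilityMeasure μ] : HasPositiveCorrelations μ := by
  intro f g hf hg hfm hgm hfb hgb
  have hpair : ∀ x y, 0 ≤ (f x - f y) * (g x - g y) := by
    intro x y
    rcases le_total x y with hxy | hxy
    · exact mul_nonneg_of_nonpos_of_nonpos (sub_nonpos.2 (hf hxy)) (sub_nonpos.2 (hg hxy))
    · exact mul_nonneg (sub_nonneg.2 (hf hxy)) (sub_nonneg.2 (hg hxy))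
  have hdouble := integral_integral_sub_mul_sub (μ := μ) (integrable_of_norm_le_one hfm hfb)
    (integrable_of_norm_le_one hgm hgb)
    (integrable_of_norm_le_one (hfm.mul hgm) (norm_mul_le_one hfb hgb))
  have hnonneg : 0 ≤ ∫ x, ∫ y, (f x - f y) * (g x - g y) ∂μ ∂μ :=
    integral_nonneg fun x => integral_nonneg fun y => hpair x y
  linarith

theorem hasPositiveCorrelations_of_subsingleton [Preorder α] [Subsingleton α] (μ : Measure α)
    [IsProbabilityMeasure μ] : HasPositiveCorrelations μ := by
  obtain ⟨x⟩ := nonempty_of_isProbabilityMeasure μ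
  have hconst (φ : α → ℝ) : ∫ y, φ y ∂μ = φ x :=
    integral_eq_const (ae_of_all _ fun y => congrArg φ (Subsingleton.elim y x))
  intro f g _ _ _ _ _ _
  rw [hconst f, hconst g, hconst fun y => f y * g y]

theorem HasPositiveCorrelations.map [Preorder α] [Preorder β] {μ : Measure α}
    (hμ : HasPositiveCorrelations μ) {e : α → β} (he : Monotone e) (hem : Measurable e) :
    HasPositiveCorrelations (μ.map e) := by
  intro f g hf hg hfm hgm hfb hgb
  have hfgm : Measurable fun x => f x * g x := hfm.mul hgm
  rw [integral_map hem.aemeasurable hfm.aestronglyMeasurable,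
    integral_map hem.aemeasurable hgm.aestronglyMeasurable,
    integral_map hem.aemeasurable hfgm.aestronglyMeasurable]
  exact hμ _ _ (hf.comp he) (hg.comp he) (hfm.comp hem) (hgm.comp hem) (fun _ => hfb _)
    (fun _ => hgb _)

/-- Harris' argument: condition on the first coordinate, correlate the sections with `ν`, then
correlate the averaged sections (which are again monotone) with `μ`. -/
theorem HasPositiveCorrelations.prod [Preorder α] [Preorder β] {μ : Measure α} {ν : Measure β}
    [IsProbabilityMeasure μ] [IsProbabilityMeasure ν]
    (hμ : HasPositiveCorrelations μ) (hν : HasPositiveCorrelations ν) :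
    HasPositiveCorrelations (μ.prod ν) := by
  intro f g hf hg hfm hgm hfb hgb
  have section_mono {φ : α × β → ℝ} (hφ : Monotone φ) (a : α) : Monotone fun b => φ (a, b) :=
    fun _ _ hb => hφ ⟨le_rfl, hb⟩
  have section_meas {φ : α × β → ℝ} (hφ : Measurable φ) (a : α) :
      Measurable fun b => φ (a, b) := hφ.comp measurable_prodMk_left
  have avg_mono {φ : α × β → ℝ} (hφ : Monotone φ) (hφm : Measurable φ)
      (hφb : ∀ p, ‖φ p‖ ≤ 1) : Monotone fun a => ∫ b, φ (a, b) ∂ν := fun a a' ha =>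
    integral_mono (integrable_of_norm_le_one (section_meas hφm a) fun _ => hφb _)
      (integrable_of_norm_le_one (section_meas hφm a') fun _ => hφb _)
      fun _ => hφ ⟨ha, le_rfl⟩
  have avg_meas {φ : α × β → ℝ} (hφ : Measurable φ) : Measurable fun a => ∫ b, φ (a, b) ∂ν :=
    hφ.stronglyMeasurable.integral_prod_right'.measurable
  have avg_bound {φ : α × β → ℝ} (hφb : ∀ p, ‖φ p‖ ≤ 1) (a : α) : ‖∫ b, φ (a, b) ∂ν‖ ≤ 1 := by
    simpa using norm_integral_le_of_norm_le_const (μ := ν) (ae_of_all _ fun b => hφb (a, b))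
  have fubini {φ : α × β → ℝ} (hφ : Measurable φ) (hφb : ∀ p, ‖φ p‖ ≤ 1) :
      ∫ p, φ p ∂μ.prod ν = ∫ a, ∫ b, φ (a, b) ∂ν ∂μ :=
    integral_prod φ (integrable_of_norm_le_one hφ hφb)
  have hfgm : Measurable fun p => f p * g p := hfm.mul hgm
  have hfgb := norm_mul_le_one hfb hgb
  rw [fubini hfm hfb, fubini hgm hgb, fubini hfgm hfgb]
  calc (∫ a, ∫ b, f (a, b) ∂ν ∂μ) * ∫ a, ∫ b, g (a, b) ∂ν ∂μ
      ≤ ∫ a, (∫ b, f (a, b) ∂ν) * ∫ b, g (a, b) ∂ν ∂μ :=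
        hμ _ _ (avg_mono hf hfm hfb) (avg_mono hg hgm hgb) (avg_meas hfm) (avg_meas hgm)
          (avg_bound hfb) (avg_bound hgb)
    _ ≤ ∫ a, ∫ b, f (a, b) * g (a, b) ∂ν ∂μ :=
        integral_mono
          (integrable_of_norm_le_one ((avg_meas hfm).mul (avg_meas hgm))
            (norm_mul_le_one (avg_bound hfb) (avg_bound hgb)))
          (integrable_of_norm_le_one (avg_meas hfgm) (avg_bound hfgb))
          fun a => hν _ _ (section_mono hf a) (section_mono hg a) (section_meas hfm a)
            (section_meas hgm a) (fun _ => hfb _) (fun _ => hgb _)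

theorem hasPositiveCorrelations_pi [LinearOrder α] :
    ∀ {n : ℕ} (ν : Fin n → Measure α) [∀ i, IsProbabilityMeasure (ν i)],
      HasPositiveCorrelations (Measure.pi ν)
  | 0, _, _ => hasPositiveCorrelations_of_subsingleton _
  | n + 1, ν, _ => by
    let e := MeasurableEquiv.piFinSuccAbove (fun _ : Fin (n + 1) => α) 0
    rw [← ((measurePreserving_piFinSuccAbove ν 0).symm e).map_eq]
    refine ((hasPositiveCorrelations_of_linearOrder (ν 0)).prod
      (hasPositiveCorrelations_pi _)).map ?_ e.symm.measurable
    rintro ⟨a, x⟩ ⟨b, y⟩ ⟨hab, hxy⟩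
    change Fin.insertNth (α := fun _ => α) 0 a x ≤ Fin.insertNth (α := fun _ => α) 0 b y
    rw [Fin.insertNth_zero', Fin.insertNth_zero']
    exact Fin.cons_le_cons.2 ⟨hab, hxy⟩

theorem HasPositiveCorrelations.antitone [Preorder α] {μ : Measure α}
    (hμ : HasPositiveCorrelations μ) {f g : α → ℝ} (hf : Antitone f) (hg : Antitone g)
    (hfm : Measurable f) (hgm : Measurable g) (hfb : ∀ x, ‖f x‖ ≤ 1) (hgb : ∀ x, ‖g x‖ ≤ 1) :
    (∫ x, f x ∂μ) * ∫ x, g x ∂μ ≤ ∫ x, f x * g x ∂μ := by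
  simpa [integral_neg] using
    hμ _ _ hf.neg hg.neg hfm.neg hgm.neg (by simpa using hfb) (by simpa using hgb)

theorem HasPositiveCorrelations.measure_mul_le_measure_inter [Preorder α] {μ : Measure α}
    [IsProbabilityMeasure μ] (hμ : HasPositiveCorrelations μ) {A B : Set α}
    (hA : MeasurableSet A) (hB : MeasurableSet B) (hAl : IsLowerSet A) (hBl : IsLowerSet B) :
    μ A * μ B ≤ μ (A ∩ B) := by
  have ind_antitone {S : Set α} (hS : IsLowerSet S) : Antitone (S.indicator (1 : α → ℝ)) := by
    intro x y hxy
    by_cases hy : y ∈ S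
    · simp [hy, hS hxy hy]
    · simp [hy, Set.indicator_nonneg]
  have ind_bound (S : Set α) (x : α) : ‖S.indicator (1 : α → ℝ) x‖ ≤ 1 := by
    by_cases hx : x ∈ S <;> simp [hx]
  have key := hμ.antitone (ind_antitone hAl) (ind_antitone hBl) (measurable_const.indicator hA)
    (measurable_const.indicator hB) (ind_bound A) (ind_bound B)
  simp only [← Pi.mul_apply (A.indicator 1), ← Set.inter_indicator_one,
    integral_indicator_one hA, integral_indicator_one hB, integral_indicator_one (hA.inter hB)]
    at key
  rwa [← ENNReal.toReal_le_toReal (by finiteness) (measure_ne_top _ _), ENNReal.toReal_mul]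

theorem HasPositiveCorrelations.prod_le_measure_biInter [Preorder α] {μ : Measure α}
    [IsProbabilityMeasure μ] (hμ : HasPositiveCorrelations μ) {ι : Type*} (s : Finset ι)
    {A : ι → Set α} (hA : ∀ i, MeasurableSet (A i)) (hAl : ∀ i, IsLowerSet (A i)) :
    ∏ i ∈ s, μ (A i) ≤ μ (⋂ i ∈ s, A i) := by
  classical
  induction s using Finset.induction_on with
  | empty => simp
  | insert a s ha ih =>
    rw [Finset.prod_insert ha, Finset.set_biInter_insert]
    calc μ (A a) * ∏ i ∈ s, μ (A i) ≤ μ (A a) * μ (⋂ i ∈ s, A i) := mul_le_mul_right ih _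
      _ ≤ μ (A a ∩ ⋂ i ∈ s, A i) :=
        hμ.measure_mul_le_measure_inter (hA a) (.biInter s.countable_toSet fun i _ => hA i)
          (hAl a) (isLowerSet_iInter₂ fun i _ => hAl i)

end PositiveCorrelations

theorem ProbabilityTheory.iIndepFun.prod_measure_le_measure_biInter {Ω β : Type*}
    [MeasurableSpace Ω] [LinearOrder β] [MeasurableSpace β] {μ : Measure Ω}
    [IsProbabilityMeasure μ] {n : ℕ} {y : Fin n → Ω → β} (hindep : iIndepFun y μ)
    (hmeas : ∀ j, Measurable (y j)) {ι : Type*} (s : Finset ι) {A : ι → Set (Fin n → β)}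
    (hA : ∀ i, MeasurableSet (A i)) (hAl : ∀ i, IsLowerSet (A i)) :
    ∏ i ∈ s, μ ((fun ω j => y j ω) ⁻¹' A i) ≤ μ (⋂ i ∈ s, (fun ω j => y j ω) ⁻¹' A i) := by
  have := fun j => Measure.isProbabilityMeasure_map (μ := μ) (hmeas j).aemeasurable
  have hT : Measurable fun ω j => y j ω := measurable_pi_lambda _ hmeas
  have hlaw := hindep.map_fun_eq_pi_map fun j => (hmeas j).aemeasurable
  rw [← Set.preimage_iInter₂, ← Measure.map_apply hT (s.measurableSet_biInter fun i _ => hA i)]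
  simp_rw [← Measure.map_apply hT (hA _), hlaw]
  exact (hasPositiveCorrelations_pi _).prod_le_measure_biInter s hA hAl

section MovingSum

variable {Ω : Type*} {m : ℕ} {y : ℕ → Ω → ℝ}

theorem movSum_eq_sum_fin {i : ℕ} (hi : m ≤ i) (ω : Ω) :
    movSum m y i ω = ∑ j : Fin m, y (i + 1 - m + j) ω := by
  rw [movSum, ← Finset.Ico_add_one_right_eq_Icc, Finset.sum_Ico_eq_sum_range,
    show i + 1 - (i + 1 - m) = m by omega,
    Fin.sum_univ_eq_sum_range (fun j => y (i + 1 - m + j) ω)]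

theorem movSum_monotone [Preorder Ω] (hy : ∀ j, Monotone (y j)) (i : ℕ) :
    Monotone (movSum m y i) :=
  fun _ _ hω => Finset.sum_le_sum fun j _ => hy j hω

theorem measurable_movSum [MeasurableSpace Ω] (hy : ∀ j, Measurable (y j)) (i : ℕ) :
    Measurable (movSum m y i) :=
  Finset.measurable_sum _ fun j _ => hy j

theorem measure_movSum_lt_eq_pi [MeasurableSpace Ω] {μ : Measure Ω} {ν : Measure ℝ}
    (hindep : iIndepFun y μ) (hmeas : ∀ i, Measurable (y i)) (hident : ∀ i, μ.map (y i) = ν)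
    {i : ℕ} (hi : m ≤ i) (h : ℝ) :
    μ {ω | movSum m y i ω < h} = (Measure.pi fun _ : Fin m => ν) {x | ∑ j, x j < h} := by
  have hinj : (fun j : Fin m => i + 1 - m + j).Injective := fun a b hab =>
    Fin.ext (Nat.add_left_cancel hab)
  have hlaw := (hindep.precomp hinj).map_fun_eq_pi_map fun j => (hmeas _).aemeasurable
  simp_rw [hident] at hlaw
  rw [← hlaw, Measure.map_apply (measurable_pi_lambda _ fun _ => hmeas _)
      (measurableSet_lt (by fun_prop) measurable_const)]
  simp only [movSum_eq_sum_fin hi, Set.preimage_ofPred_eq]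

theorem measure_movSum_lt_eq [MeasurableSpace Ω] {μ : Measure Ω} {ν : Measure ℝ}
    (hindep : iIndepFun y μ) (hmeas : ∀ i, Measurable (y i)) (hident : ∀ i, μ.map (y i) = ν)
    {i : ℕ} (hi : m ≤ i) (h : ℝ) :
    μ {ω | movSum m y i ω < h} = μ {ω | movSum m y m ω < h} := by
  rw [measure_movSum_lt_eq_pi hindep hmeas hident hi,
    measure_movSum_lt_eq_pi hindep hmeas hident le_rfl]

end MovingSum

/-- Reads `x : Fin M → β` as a sequence indexed by `ℕ`, so that `movSum` can be evaluated on the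
product space. -/
def extendByZero {β : Type*} [Zero β] (M j : ℕ) (x : Fin M → β) : β :=
  if hj : j < M then x ⟨j, hj⟩ else 0

@[simp]
theorem extendByZero_of_lt {β : Type*} [Zero β] {M j : ℕ} (hj : j < M) (x : Fin M → β) :
    extendByZero M j x = x ⟨j, hj⟩ :=
  dif_pos hj

theorem extendByZero_monotone {β : Type*} [Preorder β] [Zero β] (M j : ℕ) :
    Monotone (extendByZero (β := β) M j) := by
  intro x x' hx
  unfold extendByZero
  split_ifs
  exacts [hx _, le_rfl]

theorem measurable_extendByZero {β : Type*} [MeasurableSpace β] [Zero β] (M j : ℕ) :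
    Measurable (extendByZero (β := β) M j) := by
  unfold extendByZero
  split_ifs
  exacts [measurable_pi_apply _, measurable_const]

theorem movSum_extendByZero {Ω : Type*} {m M i : ℕ} (hi : i < M) (y : ℕ → Ω → ℝ) (ω : Ω) :
    movSum m (extendByZero M) i (fun j : Fin M => y j ω) = movSum m y i ω :=
  Finset.sum_congr rfl fun _ hj => extendByZero_of_lt ((mem_Icc.1 hj).2.trans_lt hi) _

theorem fma_association_bound_general {Ω : Type*} [MeasurableSpace Ω]
    (Pr : Measure Ω) [IsProbabilityMeasure Pr]
    (m : ℕ) (y : ℕ → Ω → ℝ)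
    (hmeas : ∀ i, Measurable (y i))
    (hindep : iIndepFun y Pr)
    (hident : ∀ i, Measure.map (y i) Pr = Measure.map (y 1) Pr)
    (k N : ℕ) (hk : m ≤ k) (h : ℝ) :
    (Pr {ω | movSum m y m ω < h}) ^ N
      ≤ Pr {ω | ∀ i ∈ Finset.Ico k (k + N), movSum m y i ω < h} := by
  set M := k + N
  let window (i : ℕ) : Set (Fin M → ℝ) := {x | movSum m (extendByZero M) i x < h}
  have hwindow {i : ℕ} (hi : i ∈ Ico k M) :
      {ω | movSum m y i ω < h} = (fun ω (j : Fin M) => y j ω) ⁻¹' window i := by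
    ext ω
    simp [window, movSum_extendByZero (mem_Ico.1 hi).2]
  calc Pr {ω | movSum m y m ω < h} ^ N
      = ∏ i ∈ Ico k M, Pr {ω | movSum m y i ω < h} := by
        rw [prod_congr rfl fun i hi =>
            measure_movSum_lt_eq hindep hmeas hident (hk.trans (mem_Ico.1 hi).1) h,
          prod_const, Nat.card_Ico, Nat.add_sub_cancel_left]
    _ = ∏ i ∈ Ico k M, Pr ((fun ω (j : Fin M) => y j ω) ⁻¹' window i) :=
        prod_congr rfl fun i hi => by rw [hwindow hi]
    _ ≤ Pr (⋂ i ∈ Ico k M, (fun ω (j : Fin M) => y j ω) ⁻¹' window i) :=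
        (hindep.precomp Fin.val_injective).prod_measure_le_measure_biInter (fun j => hmeas j) _
          (fun i => measurableSet_lt (measurable_movSum (measurable_extendByZero M) i)
            measurable_const)
          (fun i => isLowerSet_Iio h |>.preimage (movSum_monotone (extendByZero_monotone M) i))
    _ = Pr {ω | ∀ i ∈ Ico k M, movSum m y i ω < h} := by
        congr 1
        ext ω
        simp only [Set.mem_iInter₂]
        exact forall₂_congr fun i hi => by rw [← hwindow hi]; rfl

/-- for i.i.d. `y i`, the probability that the moving sums
`S k, …, S (k+N-1)` all stay below `h` is at least `Pr(S m < h)^N`. -/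
theorem fma_association_bound {Ω : Type*} [MeasurableSpace Ω]
    (Pr : Measure Ω) [IsProbabilityMeasure Pr]
    (m : ℕ) (hm : 1 ≤ m) (y : ℕ → Ω → ℝ)
    (hmeas : ∀ i, Measurable (y i))
    (hindep : iIndepFun y Pr)
    (hident : ∀ i, Measure.map (y i) Pr = Measure.map (y 1) Pr)
    (k N : ℕ) (hk : m ≤ k) (hN : 1 ≤ N) (h : ℝ) :
    (Pr {ω | movSum m y m ω < h}) ^ N
      ≤ Pr {ω | ∀ i ∈ Finset.Ico k (k + N), movSum m y i ω < h} :=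
  fma_association_bound_general Pr m y hmeas hindep hident k N hk h
end

section
/- Let $y_1, y_2, \ldots$ be i.i.d. random variables under $\Pi$, $S_n = \sum_{i=n-m+1}^n y_i$, and $T_F(h) = \inf\{n \geq m : S_n \geq h\}$. Then the worst-case probability of false alarm within an interval of length $m_\alpha$ satisfies $\sup_{l \geq m} \Pi(l \leq T_F(h) < l + m_\alpha) = \Pi(m \leq T_F(h) < m + m_\alpha)$, i.e. the supremum is attained at $l = m$. -/
open MeasureTheory ProbabilityTheory

/-- FMA stopping time `T_F(h) = inf {n ≥ m : S_n ≥ h}` (equal to `⊤` if no such `n`). -/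
noncomputable def fmaTime {Ω : Type*} (m : ℕ) (y : ℕ → Ω → ℝ) (h : ℝ) (ω : Ω) : ℕ∞ :=
  sInf ((fun n : ℕ => (n : ℕ∞)) '' {n : ℕ | m ≤ n ∧ h ≤ movSum m y n ω})

lemma ProbabilityTheory.iIndepFun.identDistrib_shift {Ω β : Type*} [MeasurableSpace Ω] [MeasurableSpace β]
    {Pr : Measure Ω} [IsProbabilityMeasure Pr] {y : ℕ → Ω → β} {μ : Measure β}
    (hindep : iIndepFun y Pr) (hmeas : ∀ i, Measurable (y i))
    (hident : ∀ i, Pr.map (y i) = μ) (a : ℕ) :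
    IdentDistrib (fun ω i => y (a + i) ω) (fun ω i => y i ω) Pr Pr where
  aemeasurable_fst := (measurable_pi_lambda _ fun i => hmeas (a + i)).aemeasurable
  aemeasurable_snd := (measurable_pi_lambda _ hmeas).aemeasurable
  map_eq := by
    rw [(hindep.precomp (add_right_injective a)).map_fun_eq_infinitePi_map (fun i => hmeas _),
      hindep.map_fun_eq_infinitePi_map hmeas]
    simp only [hident]

section WindowSums

variable {Ω : Type*} {m : ℕ} {y : ℕ → Ω → ℝ} {h : ℝ} {ω : Ω}

lemma movSum_eq_sum_range {n : ℕ} (hmn : m ≤ n + 1) :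
    movSum m y n ω = ∑ j ∈ Finset.range m, y (n + 1 - m + j) ω := by
  rw [movSum, ← Finset.Ico_add_one_right_eq_Icc, Finset.sum_Ico_eq_sum_range, Nat.sub_sub_self hmn]

def windowCrossing (m mα : ℕ) (h : ℝ) : Set (ℕ → ℝ) :=
  {x | ∃ t < mα, h ≤ ∑ j ∈ Finset.range m, x (t + j)}

lemma measurableSet_windowCrossing (m mα : ℕ) (h : ℝ) :
    MeasurableSet (windowCrossing m mα h) := by
  simp only [windowCrossing, Set.ofPred_exists, Set.ofPred_and]
  exact MeasurableSet.iUnion fun t => (MeasurableSet.const (t < mα)).inter <|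
    measurableSet_le measurable_const
      (Finset.measurable_fun_sum _ fun j _ => measurable_pi_apply (t + j))

lemma setOf_exists_le_movSum_eq_preimage {l : ℕ} (hml : m ≤ l + 1) (mα : ℕ) :
    {ω | ∃ t < mα, h ≤ movSum m y (l + t) ω}
      = (fun ω i => y (l + 1 - m + i) ω) ⁻¹' windowCrossing m mα h := by
  ext ω
  simp only [windowCrossing, Set.mem_ofPred_eq, Set.mem_preimage]
  refine exists_congr fun t => and_congr_right fun _ => ?_
  rw [movSum_eq_sum_range (by omega)]
  have hshift : l + t + 1 - m = l + 1 - m + t := by omega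
  rw [hshift]
  simp only [add_assoc]

lemma le_fmaTime : (m : ℕ∞) ≤ fmaTime m y h ω := by
  refine le_sInf ?_
  rintro _ ⟨n, ⟨hmn, -⟩, rfl⟩
  exact Nat.cast_le.2 hmn

lemma fmaTime_le {n : ℕ} (hmn : m ≤ n) (hS : h ≤ movSum m y n ω) : fmaTime m y h ω ≤ n :=
  sInf_le ⟨n, ⟨hmn, hS⟩, rfl⟩

lemma fmaTime_lt_coe_iff {c : ℕ} :
    fmaTime m y h ω < c ↔ ∃ n, m ≤ n ∧ h ≤ movSum m y n ω ∧ n < c := by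
  constructor
  · rw [fmaTime, sInf_lt_iff]
    rintro ⟨_, ⟨n, ⟨hmn, hS⟩, rfl⟩, hnc⟩
    exact ⟨n, hmn, hS, Nat.cast_lt.1 hnc⟩
  · rintro ⟨n, hmn, hS, hnc⟩
    exact (fmaTime_le hmn hS).trans_lt (by exact_mod_cast hnc)

lemma setOf_fmaTime_mem_Ico_subset (l mα : ℕ) :
    {ω | (l : ℕ∞) ≤ fmaTime m y h ω ∧ fmaTime m y h ω < (l + mα : ℕ)}
      ⊆ {ω | ∃ t < mα, h ≤ movSum m y (l + t) ω} := by
  rintro ω ⟨hlT, hTlt⟩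
  obtain ⟨n, hmn, hS, hnlt⟩ := fmaTime_lt_coe_iff.1 hTlt
  have hln : l ≤ n := by exact_mod_cast hlT.trans (fmaTime_le hmn hS)
  exact ⟨n - l, by omega, by rwa [Nat.add_sub_cancel' hln]⟩

lemma setOf_fmaTime_mem_Ico_self (mα : ℕ) :
    {ω | (m : ℕ∞) ≤ fmaTime m y h ω ∧ fmaTime m y h ω < (m + mα : ℕ)}
      = {ω | ∃ t < mα, h ≤ movSum m y (m + t) ω} := by
  refine (setOf_fmaTime_mem_Ico_subset m mα).antisymm ?_
  rintro ω ⟨t, htα, hS⟩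
  exact ⟨le_fmaTime, fmaTime_lt_coe_iff.2 ⟨m + t, by omega, hS, by omega⟩⟩

end WindowSums

lemma measure_exists_le_movSum_eq {Ω : Type*} [MeasurableSpace Ω]
    {Pr : Measure Ω} [IsProbabilityMeasure Pr] {y : ℕ → Ω → ℝ} {μ : Measure ℝ}
    (hindep : iIndepFun y Pr) (hmeas : ∀ i, Measurable (y i))
    (hident : ∀ i, Pr.map (y i) = μ) {m l l' : ℕ} (hml : m ≤ l + 1) (hml' : m ≤ l' + 1)
    (mα : ℕ) (h : ℝ) :
    Pr {ω | ∃ t < mα, h ≤ movSum m y (l + t) ω} = Pr {ω | ∃ t < mα, h ≤ movSum m y (l' + t) ω} := by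
  have hE := measurableSet_windowCrossing m mα h
  rw [setOf_exists_le_movSum_eq_preimage hml, setOf_exists_le_movSum_eq_preimage hml',
    (hindep.identDistrib_shift hmeas hident _).measure_mem_eq hE,
    (hindep.identDistrib_shift hmeas hident _).measure_mem_eq hE]

theorem fma_worst_case_false_alarm_at_m_general {Ω : Type*} [MeasurableSpace Ω]
    (Pr : Measure Ω) [IsProbabilityMeasure Pr]
    (m : ℕ) (mα : ℕ) (y : ℕ → Ω → ℝ)
    (hmeas : ∀ i, Measurable (y i))
    (hindep : iIndepFun y Pr)
    (hident : ∀ i, Measure.map (y i) Pr = Measure.map (y 1) Pr)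
    (h : ℝ) :
    (⨆ (l : ℕ) (_ : m ≤ l),
        Pr {ω | (l : ℕ∞) ≤ fmaTime m y h ω ∧ fmaTime m y h ω < (l + mα : ℕ)})
      = Pr {ω | (m : ℕ∞) ≤ fmaTime m y h ω ∧ fmaTime m y h ω < (m + mα : ℕ)} := by
  refine le_antisymm (iSup₂_le fun l hml => ?_) (le_iSup₂_of_le m le_rfl le_rfl)
  rw [setOf_fmaTime_mem_Ico_self,
    measure_exists_le_movSum_eq hindep hmeas hident m.le_succ (hml.trans l.le_succ)]
  exact measure_mono (setOf_fmaTime_mem_Ico_subset l mα)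

/-- the worst-case false alarm probability
`sup_{l ≥ m} Pr(l ≤ T_F(h) < l + mα)` is attained at `l = m`. -/
theorem fma_worst_case_false_alarm_at_m {Ω : Type*} [MeasurableSpace Ω]
    (Pr : Measure Ω) [IsProbabilityMeasure Pr]
    (m : ℕ) (hm : 1 ≤ m) (mα : ℕ) (hmα : 1 ≤ mα) (y : ℕ → Ω → ℝ)
    (hmeas : ∀ i, Measurable (y i))
    (hindep : iIndepFun y Pr)
    (hident : ∀ i, Measure.map (y i) Pr = Measure.map (y 1) Pr)
    (h : ℝ) :
    (⨆ (l : ℕ) (_ : m ≤ l),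
        Pr {ω | (l : ℕ∞) ≤ fmaTime m y h ω ∧ fmaTime m y h ω < (l + mα : ℕ)})
      = Pr {ω | (m : ℕ∞) ≤ fmaTime m y h ω ∧ fmaTime m y h ω < (m + mα : ℕ)} :=
  fma_worst_case_false_alarm_at_m_general Pr m mα y hmeas hindep hident h
end
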